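/- arXiv:1701.03509 — 5 statements merged into one kernel-verified Lean document; each statement's English description precedes it below -/
import Mathlib

section
/- Let F be a smooth vector field on a manifold M generating a flow Φ: M × ℝ → M, and let α: M → ℝ be smooth. Define the shift map Φ_α(x) = Φ(x, α(x)). If y ∈ M satisfies α(y) = 0 (so Φ_α(y) = y), then the determinant of the tangent map T_y Φ_α : T_y M → T_y M equals 1 + (F·α)(y), where F·α denotes the Lie derivative of α along F. -/
lemma det_one_add_smulRight {E : Type*} [NormedAddCommGroup E] [NormedSpace ℝ E]
    [FiniteDimensional ℝ E] (f : E →ₗ[ℝ] ℝ) (w : E) :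
    LinearMap.det (1 + f.smulRight w) = 1 + f w := by
  set b := Module.finBasis ℝ E
  rw [← LinearMap.det_toMatrix b, map_add, LinearMap.toMatrix_one]
  have hM : LinearMap.toMatrix b b (f.smulRight w)
      = Matrix.replicateCol (Fin 1) (fun i => b.repr w i) * Matrix.replicateRow (Fin 1) (fun j => f (b j)) := by
    ext i j
    simp [LinearMap.toMatrix_apply, Matrix.mul_apply, Matrix.replicateCol, Matrix.replicateRow, mul_comm]
  rw [hM]
  erw [Matrix.det_one_add_replicateCol_mul_replicateRow]
  congr 1
  rw [dotProduct]
  conv_rhs => rw [← b.sum_repr w, map_sum]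
  simp [mul_comm]

/-- If `Φ` is the flow of a smooth vector field `F` on `M` (modelled on a
finite-dimensional chart `E`), `α : M → ℝ` is smooth, and `α y = 0` (so `y` is a fixed
point of the shift map `Φ_α`), then the determinant of the tangent map
`T_y Φ_α : T_y M → T_y M` equals `1 + (F·α)(y)`. -/
theorem stmt0
    {E : Type*} [NormedAddCommGroup E] [NormedSpace ℝ E] [FiniteDimensional ℝ E]
    (F : E → E) (hF : ContDiff ℝ (⊤ : ℕ∞) F)
    (Φ : E → ℝ → E)
    (hΦsmooth : ContDiff ℝ (⊤ : ℕ∞) (fun p : E × ℝ => Φ p.1 p.2))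
    (hΦ0 : ∀ x, Φ x 0 = x)
    (hΦadd : ∀ x s t, Φ (Φ x t) s = Φ x (s + t))
    (hΦder : ∀ x t, HasDerivAt (Φ x) (F (Φ x t)) t)
    (α : E → ℝ) (hα : ContDiff ℝ (⊤ : ℕ∞) α)
    (y : E) (hy : α y = 0) :
    LinearMap.det ((fderiv ℝ (fun x => Φ x (α x)) y : E →L[ℝ] E) : E →ₗ[ℝ] E)
      = 1 + fderiv ℝ α y (F y) := by
  set L := fderiv ℝ (fun p : E × ℝ => Φ p.1 p.2) (y, 0) with hL
  have hfull : HasFDerivAt (fun p : E × ℝ => Φ p.1 p.2) L (y, 0) :=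
    (hΦsmooth.differentiable (by simp) (y, 0)).hasFDerivAt
  set D := fderiv ℝ α y with hD
  have hDα : HasFDerivAt α D y := (hα.differentiable (by simp) y).hasFDerivAt
  -- L restricted to the first factor is the identity
  have h1 : L.comp (ContinuousLinearMap.inl ℝ E ℝ) = ContinuousLinearMap.id ℝ E := by
    have hc : HasFDerivAt (fun x : E => Φ x 0)
        (L.comp ((ContinuousLinearMap.id ℝ E).prod 0)) y :=
      hfull.comp y (f := fun x : E => (x, (0:ℝ))) (HasFDerivAt.prodMk (hasFDerivAt_id y) (hasFDerivAt_const 0 y))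
    have hid : HasFDerivAt (fun x : E => Φ x 0) (ContinuousLinearMap.id ℝ E) y := by
      simp only [hΦ0]; exact hasFDerivAt_id (𝕜 := ℝ) y
    have := hc.unique hid
    rw [← this]
    congr 1
  -- L restricted to the second factor is t ↦ t • F y
  have h2 : L.comp (ContinuousLinearMap.inr ℝ E ℝ)
      = (1 : ℝ →L[ℝ] ℝ).smulRight (F y) := by
    have hc : HasFDerivAt (fun t : ℝ => Φ y t)
        (L.comp ((0 : ℝ →L[ℝ] E).prod (ContinuousLinearMap.id ℝ ℝ))) 0 :=
      hfull.comp 0 (f := fun t : ℝ => (y, t)) (HasFDerivAt.prodMk (hasFDerivAt_const y 0) (hasFDerivAt_id 0))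
    have hd : HasFDerivAt (fun t : ℝ => Φ y t)
        ((1 : ℝ →L[ℝ] ℝ).smulRight (F y)) 0 := by
      have := (hΦder y 0).hasFDerivAt
      rw [hΦ0] at this; exact this
    have := hc.unique hd
    rw [← this]
    congr 1
  have key : HasFDerivAt (fun x => Φ x (α x))
      (ContinuousLinearMap.id ℝ E + D.smulRight (F y)) y := by
    have hc : HasFDerivAt (fun x => Φ x (α x))
        (L.comp ((ContinuousLinearMap.id ℝ E).prod D)) y := by
      have hfull' : HasFDerivAt (fun p : E × ℝ => Φ p.1 p.2) L (y, α y) := by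
        rw [hy]; exact hfull
      exact hfull'.comp y (f := fun x : E => (x, α x)) (HasFDerivAt.prodMk (hasFDerivAt_id y) hDα)
    convert hc using 1
    ext v
    have : (v, D v) = ((v, 0) : E × ℝ) + ((0 : E), D v) := by simp
    simp only [ContinuousLinearMap.comp_apply, ContinuousLinearMap.prod_apply,
      ContinuousLinearMap.coe_id', id_eq, ContinuousLinearMap.add_apply,
      ContinuousLinearMap.smulRight_apply]
    rw [this, map_add]
    have e1 := congrArg (fun (T : E →L[ℝ] E) => T v) h1
    have e2 := congrArg (fun (T : ℝ →L[ℝ] E) => T (D v)) h2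
    simp only [ContinuousLinearMap.comp_apply, ContinuousLinearMap.inl_apply,
      ContinuousLinearMap.inr_apply, ContinuousLinearMap.coe_id', id_eq,
      ContinuousLinearMap.smulRight_apply, ContinuousLinearMap.one_apply] at e1 e2
    rw [e1, e2]
  rw [key.fderiv]
  have hcoe : (((ContinuousLinearMap.id ℝ E + D.smulRight (F y)) : E →L[ℝ] E) : E →ₗ[ℝ] E)
      = 1 + (D : E →ₗ[ℝ] ℝ).smulRight (F y) := by
    ext v; simp
  rw [hcoe, det_one_add_smulRight]; rfl
end

section
/- Let F be a smooth vector field on a manifold M with flow Φ, α: M → ℝ smooth, y ∈ M, and z = Φ_α(y) where Φ_α(x) = Φ(x, α(x)). Then the tangent map T_y Φ_α : T_y M → T_z M is a linear isomorphism if and only if 1 + (F·α)(y) ≠ 0. -/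
/-- For the flow `Φ` of a smooth vector field `F` and smooth `α : M → ℝ`,
the tangent map `T_y Φ_α` of the shift map `Φ_α(x) = Φ(x, α(x))` at `y` is a linear
isomorphism if and only if `1 + (F·α)(y) ≠ 0`. -/
theorem stmt1
    {E : Type*} [NormedAddCommGroup E] [NormedSpace ℝ E] [FiniteDimensional ℝ E]
    (F : E → E) (hF : ContDiff ℝ (⊤ : ℕ∞) F)
    (Φ : E → ℝ → E)
    (hΦsmooth : ContDiff ℝ (⊤ : ℕ∞) (fun p : E × ℝ => Φ p.1 p.2))
    (hΦ0 : ∀ x, Φ x 0 = x)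
    (hΦadd : ∀ x s t, Φ (Φ x t) s = Φ x (s + t))
    (hΦder : ∀ x t, HasDerivAt (Φ x) (F (Φ x t)) t)
    (α : E → ℝ) (hα : ContDiff ℝ (⊤ : ℕ∞) α)
    (y : E) :
    Function.Bijective (fderiv ℝ (fun x => Φ x (α x)) y)
      ↔ 1 + fderiv ℝ α y (F y) ≠ 0 := by
  classical
  set ℓ := fderiv ℝ α y with hℓdef
  set z := Φ y (α y) with hzdef
  have hGdiff : Differentiable ℝ (fun p : E × ℝ => Φ p.1 p.2) :=
    hΦsmooth.differentiable (by simp)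
  have hslice : ∀ t : ℝ, Differentiable ℝ (fun x => Φ x t) := fun t =>
    hGdiff.comp (differentiable_id.prodMk (differentiable_const t))
  set A := fderiv ℝ (fun x => Φ x (α y)) y with hAdef
  have hA : HasFDerivAt (fun x => Φ x (α y)) A y := (hslice (α y) y).hasFDerivAt
  set DG := fderiv ℝ (fun p : E × ℝ => Φ p.1 p.2) (y, α y) with hDGdef
  have hDG : HasFDerivAt (fun p : E × ℝ => Φ p.1 p.2) DG (y, α y) :=
    (hGdiff (y, α y)).hasFDerivAt
  -- partial derivative in x
  have hinl : HasFDerivAt (fun x : E => ((x, α y) : E × ℝ))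
      ((ContinuousLinearMap.id ℝ E).prod 0) y :=
    HasFDerivAt.prodMk (hasFDerivAt_id y) (hasFDerivAt_const (α y) y)
  have hAcomp : A = DG.comp ((ContinuousLinearMap.id ℝ E).prod 0) :=
    hA.unique (HasFDerivAt.comp (g := fun p : E × ℝ => Φ p.1 p.2) y hDG hinl)
  have hAv : ∀ v : E, A v = DG (v, 0) := by
    intro v; rw [hAcomp]; rfl
  -- partial derivative in t
  have hsnd : HasDerivAt (Φ y) (DG ((0 : E), (1 : ℝ))) (α y) := by
    have h1 : HasDerivAt (fun t : ℝ => ((y, t) : E × ℝ)) ((0 : E), (1 : ℝ)) (α y) :=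
      HasDerivAt.prodMk (hasDerivAt_const (α y) y) (hasDerivAt_id (α y))
    exact hDG.comp_hasDerivAt (α y) h1
  have hFz : DG ((0 : E), (1 : ℝ)) = F z := hsnd.unique (hΦder y (α y))
  have hDGeval : ∀ (v : E) (s : ℝ), DG (v, s) = A v + s • F z := by
    intro v s
    have hpair : ((v, s) : E × ℝ) = ((v, (0 : ℝ)) : E × ℝ) + s • (((0 : E), (1 : ℝ)) : E × ℝ) := by
      simp
    rw [hpair, map_add, map_smul, hFz, hAv]
  -- derivative of the shift map
  have hinner : HasFDerivAt (fun x : E => ((x, α x) : E × ℝ))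
      ((ContinuousLinearMap.id ℝ E).prod ℓ) y :=
    HasFDerivAt.prodMk (hasFDerivAt_id y) (hα.differentiable (by simp) y).hasFDerivAt
  have hD : HasFDerivAt (fun x => Φ x (α x))
      (DG.comp ((ContinuousLinearMap.id ℝ E).prod ℓ)) y := HasFDerivAt.comp (g := fun p : E × ℝ => Φ p.1 p.2) y hDG hinner
  have hDeval : ∀ v : E, fderiv ℝ (fun x => Φ x (α x)) y v = A v + ℓ v • F z := by
    intro v
    rw [hD.fderiv]
    exact hDGeval v (ℓ v)
  -- A is bijective
  set B := fderiv ℝ (fun x => Φ x (-α y)) z with hBdef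
  have hB : HasFDerivAt (fun x => Φ x (-α y)) B z := (hslice (-α y) z).hasFDerivAt
  have hzy : Φ z (-α y) = y := by
    rw [hzdef, hΦadd, neg_add_cancel, hΦ0]
  have hBA : B.comp A = ContinuousLinearMap.id ℝ E := by
    have hc : HasFDerivAt ((fun x => Φ x (-α y)) ∘ (fun x => Φ x (α y))) (B.comp A) y :=
      hB.comp y hA
    have heq : ((fun x => Φ x (-α y)) ∘ (fun x => Φ x (α y))) = id := by
      funext x
      simp only [Function.comp, hΦadd, neg_add_cancel, hΦ0, id]
    rw [heq] at hc
    exact hc.unique (hasFDerivAt_id y)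
  have hAB : A.comp B = ContinuousLinearMap.id ℝ E := by
    have hA' : HasFDerivAt (fun x => Φ x (α y)) A (Φ z (-α y)) := by
      rw [hzy]; exact hA
    have hc : HasFDerivAt ((fun x => Φ x (α y)) ∘ (fun x => Φ x (-α y))) (A.comp B) z :=
      hA'.comp z hB
    have heq : ((fun x => Φ x (α y)) ∘ (fun x => Φ x (-α y))) = id := by
      funext x
      simp only [Function.comp, hΦadd, add_neg_cancel, hΦ0, id]
    rw [heq] at hc
    exact hc.unique (hasFDerivAt_id z)
  have hAbij : Function.Bijective A := by
    constructor
    · intro a b hab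
      have := congrArg B hab
      simpa [← ContinuousLinearMap.comp_apply, hBA] using this
    · intro v
      refine ⟨B v, ?_⟩
      have := congrFun (congrArg (DFunLike.coe) hAB) v
      simpa using this
  -- A maps F y to F z
  have hAFy : A (F y) = F z := by
    have hf : HasDerivAt (Φ y) (F y) 0 := by
      have := hΦder y 0; rwa [hΦ0] at this
    have hA' : HasFDerivAt (fun x => Φ x (α y)) A (Φ y 0) := by
      rw [hΦ0]; exact hA
    have h1 : HasDerivAt (fun t => Φ (Φ y t) (α y)) (A (F y)) 0 :=
      hA'.comp_hasDerivAt 0 hf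
    have h2 : HasDerivAt (fun t => Φ (Φ y t) (α y)) (F z) 0 := by
      have hg : HasDerivAt (fun t : ℝ => α y + t) 1 0 := by
        simpa using (hasDerivAt_id (0 : ℝ)).const_add (α y)
      have hΦy : HasDerivAt (Φ y) (F (Φ y (α y))) (α y + 0) := by
        rw [add_zero]; exact hΦder y (α y)
      have h3 : HasDerivAt ((Φ y) ∘ fun t : ℝ => α y + t) ((1 : ℝ) • F (Φ y (α y))) 0 :=
        hΦy.scomp 0 hg
      simp only [Function.comp_def, one_smul] at h3
      have heq : (fun t : ℝ => Φ y (α y + t)) = fun t => Φ (Φ y t) (α y) := by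
        funext t; rw [hΦadd]
      rw [heq] at h3
      exact h3
    exact h1.unique h2
  -- the rank-one factorization
  have hDT : (⇑(fderiv ℝ (fun x => Φ x (α x)) y) : E → E)
      = A ∘ (fun v => v + ℓ v • F y) := by
    funext v
    simp only [Function.comp]
    rw [hDeval v, map_add, map_smul, hAFy]
  rw [hDT, Function.Bijective.of_comp_iff' hAbij]
  -- rank-one perturbation of the identity
  set T : E →ₗ[ℝ] E := LinearMap.id + (ℓ : E →ₗ[ℝ] ℝ).smulRight (F y) with hTdef
  have hT : ∀ v : E, T v = v + ℓ v • F y := fun v => rfl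
  have hTfun : (fun v : E => v + ℓ v • F y) = ⇑T := by
    funext v; rw [hT]
  rw [hTfun]
  constructor
  · intro hbij
    intro h0
    have h0' : (1 : ℝ) + ℓ (F y) = 0 := h0
    have hT0 : T (F y) = 0 := by
      rw [hT]
      have : F y + ℓ (F y) • F y = ((1 : ℝ) + ℓ (F y)) • F y := by
        rw [add_smul, one_smul]
      rw [this, h0', zero_smul]
    have hFy0 : F y = 0 := by
      have := hbij.1 (a₁ := F y) (a₂ := 0) (by rw [hT0, map_zero])
      exact this
    rw [hFy0, map_zero] at h0'
    norm_num at h0'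
  · intro h0
    have hinj : Function.Injective T := by
      rw [injective_iff_map_eq_zero]
      intro x hx
      rw [hT] at hx
      have hℓx : ℓ x = 0 := by
        have := congrArg ℓ hx
        rw [map_add, map_smul, map_zero, smul_eq_mul] at this
        have h1 : ℓ x * (1 + ℓ (F y)) = 0 := by ring_nf; linarith [this]
        rcases mul_eq_zero.mp h1 with h | h
        · exact h
        · exact absurd h h0
      rw [hℓx, zero_smul, add_zero] at hx
      exact hx
    exact ⟨hinj, LinearMap.injective_iff_surjective.mp hinj⟩
end

section
/- Let (M, ω) be a compact symplectic surface, f ∈ C^∞(M, ℝ), H its Hamiltonian vector field generating a flow Φ, and α ∈ C^∞(M, ℝ). Then the pullback of ω under the shift map Φ_α satisfies Φ_α^* ω = (1 + H·α) · ω. -/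
lemma vec_decomp (w : ℝ × ℝ) : w = w.1 • ((1:ℝ),(0:ℝ)) + w.2 • ((0:ℝ),(1:ℝ)) := by
  ext <;> simp

lemma clm_lin {F : Type*} [NormedAddCommGroup F] [NormedSpace ℝ F]
    (L : (ℝ × ℝ) →L[ℝ] F) (w : ℝ × ℝ) :
    L w = w.1 • L ((1:ℝ),(0:ℝ)) + w.2 • L ((0:ℝ),(1:ℝ)) := by
  conv_lhs => rw [vec_decomp w]
  rw [map_add, map_smul, map_smul]

lemma fderiv_eval {E F : Type*} [NormedAddCommGroup E] [NormedSpace ℝ E]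
    [NormedAddCommGroup F] [NormedSpace ℝ F] {g : E → F}
    (hg : Differentiable ℝ (fderiv ℝ g)) (z a b : E) :
    fderiv ℝ (fun y => fderiv ℝ g y a) z b = fderiv ℝ (fderiv ℝ g) z b a := by
  have h1 := ((ContinuousLinearMap.apply ℝ F a).hasFDerivAt
      (x := fderiv ℝ g z)).comp z (hg z).hasFDerivAt
  have h2 : (fun y => fderiv ℝ g y a)
      = (ContinuousLinearMap.apply ℝ F a) ∘ (fderiv ℝ g) := rfl
  rw [h2, h1.fderiv]
  rfl

lemma fderiv_sym {E F : Type*} [NormedAddCommGroup E] [NormedSpace ℝ E]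
    [NormedAddCommGroup F] [NormedSpace ℝ F] {g : E → F}
    (hg : ContDiff ℝ (⊤ : ℕ∞) g) (z a b : E) :
    fderiv ℝ (fun y => fderiv ℝ g y a) z b = fderiv ℝ (fun y => fderiv ℝ g y b) z a := by
  have hg1 : Differentiable ℝ g := hg.differentiable (by simp)
  have hg' : Differentiable ℝ (fderiv ℝ g) := (hg.fderiv_right (m := (⊤ : ℕ∞)) (by simp)).differentiable (by simp)
  rw [fderiv_eval hg', fderiv_eval hg']
  exact second_derivative_symmetric (fun y => (hg1 y).hasFDerivAt) (hg' z).hasFDerivAt b a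

lemma det_trace (L : (ℝ × ℝ) →L[ℝ] (ℝ × ℝ)) (a b : ℝ × ℝ) :
    ((L a).1 * b.2 - (L a).2 * b.1) + (a.1 * (L b).2 - a.2 * (L b).1)
      = ((L ((1:ℝ),(0:ℝ))).1 + (L ((0:ℝ),(1:ℝ))).2) * (a.1 * b.2 - a.2 * b.1) := by
  rw [clm_lin L a, clm_lin L b]
  simp only [Prod.fst_add, Prod.snd_add, Prod.smul_fst, Prod.smul_snd, smul_eq_mul]
  ring

/-- In a chart with volume form `ω = γ dx∧dy`, let `H` be the Hamiltonian
vector field of a smooth `f` (i.e. `df(u) = ω(u,H)`) with flow `Φ`, and `α` smooth.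
Then the pullback of `ω` under the shift map `Φ_α(x) = Φ(x, α(x))` satisfies
`Φ_α^*ω = (1 + H·α)·ω`, i.e. pointwise on pairs of tangent vectors. -/
theorem stmt9
    (γ : ℝ × ℝ → ℝ) (hγ : ContDiff ℝ (⊤ : ℕ∞) γ) (hγ0 : ∀ z, γ z ≠ 0)
    (f : ℝ × ℝ → ℝ) (hf : ContDiff ℝ (⊤ : ℕ∞) f)
    (H : ℝ × ℝ → ℝ × ℝ) (hHsm : ContDiff ℝ (⊤ : ℕ∞) H)
    (hH : ∀ z u, fderiv ℝ f z u = γ z * (u.1 * (H z).2 - u.2 * (H z).1))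
    (Φ : (ℝ × ℝ) → ℝ → (ℝ × ℝ))
    (hΦsm : ContDiff ℝ (⊤ : ℕ∞) (fun p : (ℝ × ℝ) × ℝ => Φ p.1 p.2))
    (hΦ0 : ∀ x, Φ x 0 = x)
    (hΦadd : ∀ x s t, Φ (Φ x t) s = Φ x (s + t))
    (hΦder : ∀ x t, HasDerivAt (Φ x) (H (Φ x t)) t)
    (α : ℝ × ℝ → ℝ) (hα : ContDiff ℝ (⊤ : ℕ∞) α) :
    ∀ x u v : ℝ × ℝ,
      γ (Φ x (α x)) *
        ((fderiv ℝ (fun p => Φ p (α p)) x u).1 * (fderiv ℝ (fun p => Φ p (α p)) x v).2 -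
         (fderiv ℝ (fun p => Φ p (α p)) x u).2 * (fderiv ℝ (fun p => Φ p (α p)) x v).1)
      = (1 + fderiv ℝ α x (H x)) * (γ x * (u.1 * v.2 - u.2 * v.1)) := by
  intro x u v
  set G : (ℝ × ℝ) × ℝ → ℝ × ℝ := fun p => Φ p.1 p.2 with hGdef
  have hGsm : ContDiff ℝ (⊤ : ℕ∞) G := hΦsm
  have hGdiff : Differentiable ℝ G := hGsm.differentiable (by simp)
  have hγdiff : Differentiable ℝ γ := hγ.differentiable (by simp)
  have hfdiff : Differentiable ℝ f := hf.differentiable (by simp)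
  have hHdiff : Differentiable ℝ H := hHsm.differentiable (by simp)
  have hαdiff : Differentiable ℝ α := hα.differentiable (by simp)
  -- time derivative of G
  have hDt : ∀ z : (ℝ × ℝ) × ℝ, fderiv ℝ G z ((0:ℝ×ℝ),(1:ℝ)) = H (Φ z.1 z.2) := by
    intro z
    have hline : HasDerivAt (fun s : ℝ => ((z.1 : ℝ × ℝ), s)) (((0:ℝ×ℝ),(1:ℝ))) z.2 :=
      (hasDerivAt_const _ _).prodMk (hasDerivAt_id _)
    have hcomp : HasDerivAt (fun s => Φ z.1 s) (fderiv ℝ G z ((0:ℝ×ℝ),(1:ℝ))) z.2 :=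
      (hGdiff z).hasFDerivAt.comp_hasDerivAt (l := G) z.2 hline
    exact hcomp.unique (hΦder z.1 z.2)
  -- space derivative of G vs the time-t map
  have hA : ∀ (p : ℝ × ℝ) (t : ℝ), HasFDerivAt (fun q => Φ q t)
      ((fderiv ℝ G (p, t)).comp ((ContinuousLinearMap.id ℝ (ℝ×ℝ)).prod
        (0 : (ℝ×ℝ) →L[ℝ] ℝ))) p := by
    intro p t
    exact (hGdiff (p, t)).hasFDerivAt.comp (g := G) (f := fun q => (q, t)) p
      ((hasFDerivAt_id p).prodMk (hasFDerivAt_const t p))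
  have hAval : ∀ (p : ℝ × ℝ) (t : ℝ) (w : ℝ × ℝ),
      fderiv ℝ (fun q => Φ q t) p w = fderiv ℝ G (p, t) (w, 0) := by
    intro p t w
    rw [(hA p t).fderiv]
    simp
  -- invariance of f under the flow
  have hfinv : ∀ (p : ℝ × ℝ) (t : ℝ), f (Φ p t) = f p := by
    intro p t
    have hder : ∀ s, HasDerivAt (fun s => f (Φ p s)) (fderiv ℝ f (Φ p s) (H (Φ p s))) s :=
      fun s => (hfdiff (Φ p s)).hasFDerivAt.comp_hasDerivAt s (hΦder p s)
    have hzero : ∀ s, deriv (fun s => f (Φ p s)) s = 0 := by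
      intro s; rw [(hder s).deriv, hH]; ring
    have := is_const_of_deriv_eq_zero (fun s => (hder s).differentiableAt) hzero t 0
    simpa [hΦ0] using this
  -- invariance of df under the flow
  have hdfinv : ∀ (p : ℝ × ℝ) (t : ℝ) (w : ℝ × ℝ),
      fderiv ℝ f (Φ p t) (fderiv ℝ G (p, t) (w, 0)) = fderiv ℝ f p w := by
    intro p t w
    have hc : HasFDerivAt (fun q => f (Φ q t))
        ((fderiv ℝ f (Φ p t)).comp ((fderiv ℝ G (p, t)).comp
          ((ContinuousLinearMap.id ℝ (ℝ×ℝ)).prod (0 : (ℝ×ℝ) →L[ℝ] ℝ)))) p :=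
      (hfdiff _).hasFDerivAt.comp p (hA p t)
    have heq : (fun q => f (Φ q t)) = f := funext (fun q => hfinv q t)
    rw [heq] at hc
    conv_rhs => rw [hc.fderiv]
    simp
  -- divergence-free identity
  have hdiv : ∀ z : ℝ × ℝ,
      fderiv ℝ γ z ((1:ℝ),(0:ℝ)) * (H z).1 + fderiv ℝ γ z ((0:ℝ),(1:ℝ)) * (H z).2
        + γ z * ((fderiv ℝ H z ((1:ℝ),(0:ℝ))).1 + (fderiv ℝ H z ((0:ℝ),(1:ℝ))).2) = 0 := by
    intro z
    have e1 : (fun y => fderiv ℝ f y ((1:ℝ),(0:ℝ))) = fun y => γ y * (H y).2 := by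
      funext y; rw [hH]; ring
    have e2 : (fun y => fderiv ℝ f y ((0:ℝ),(1:ℝ))) = fun y => -(γ y * (H y).1) := by
      funext y; rw [hH]; ring
    have hsym := fderiv_sym hf z ((1:ℝ),(0:ℝ)) ((0:ℝ),(1:ℝ))
    rw [e1, e2] at hsym
    have p1 : HasFDerivAt (fun y => γ y * (H y).2)
        (γ z • ((ContinuousLinearMap.snd ℝ ℝ ℝ).comp (fderiv ℝ H z))
          + (H z).2 • fderiv ℝ γ z) z :=
      (hγdiff z).hasFDerivAt.mul ((hHdiff z).hasFDerivAt.snd)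
    have p2 : HasFDerivAt (fun y => -(γ y * (H y).1))
        (-(γ z • ((ContinuousLinearMap.fst ℝ ℝ ℝ).comp (fderiv ℝ H z))
          + (H z).1 • fderiv ℝ γ z)) z :=
      ((hγdiff z).hasFDerivAt.mul ((hHdiff z).hasFDerivAt.fst)).neg
    rw [p1.fderiv, p2.fderiv] at hsym
    simp only [ContinuousLinearMap.add_apply, ContinuousLinearMap.smul_apply,
      ContinuousLinearMap.coe_comp', Function.comp_apply, ContinuousLinearMap.coe_snd',
      ContinuousLinearMap.coe_fst', ContinuousLinearMap.neg_apply, smul_eq_mul] at hsym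
    linarith
  -- the ODE satisfied by the space derivative along the flow
  have hODE : ∀ (p w : ℝ × ℝ) (s : ℝ),
      HasDerivAt (fun r => fderiv ℝ G (p, r) (w, 0))
        (fderiv ℝ H (Φ p s) (fderiv ℝ G (p, s) (w, 0))) s := by
    intro p w s
    have hG2d : Differentiable ℝ (fderiv ℝ G) :=
      (hGsm.fderiv_right (m := (⊤ : ℕ∞)) (by simp)).differentiable (by simp)
    have hline : HasDerivAt (fun r : ℝ => ((p : ℝ × ℝ), r)) (((0:ℝ×ℝ),(1:ℝ))) s :=
      (hasDerivAt_const _ _).prodMk (hasDerivAt_id _)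
    have hcur : HasDerivAt (fun r => fderiv ℝ G (p, r))
        (fderiv ℝ (fderiv ℝ G) (p, s) ((0:ℝ×ℝ),(1:ℝ))) s :=
      (hG2d (p, s)).hasFDerivAt.comp_hasDerivAt s hline
    have happ : HasDerivAt (fun r => fderiv ℝ G (p, r) (w, 0))
        (fderiv ℝ (fderiv ℝ G) (p, s) ((0:ℝ×ℝ),(1:ℝ)) ((w, 0) : (ℝ×ℝ)×ℝ)) s := by
      have := hcur.clm_apply (hasDerivAt_const s (((w, 0) : (ℝ×ℝ)×ℝ)))
      simpa using this
    have hkey : fderiv ℝ (fderiv ℝ G) (p, s) ((0:ℝ×ℝ),(1:ℝ)) ((w, 0) : (ℝ×ℝ)×ℝ)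
        = fderiv ℝ H (Φ p s) (fderiv ℝ G (p, s) (w, 0)) := by
      rw [← fderiv_eval hG2d (p, s) ((w,0) : (ℝ×ℝ)×ℝ) ((0:ℝ×ℝ),(1:ℝ))]
      rw [fderiv_sym hGsm (p, s) ((w,0) : (ℝ×ℝ)×ℝ) ((0:ℝ×ℝ),(1:ℝ))]
      have hHG : (fun z : (ℝ×ℝ)×ℝ => fderiv ℝ G z ((0:ℝ×ℝ),(1:ℝ)))
          = fun z : (ℝ×ℝ)×ℝ => H (G z) := funext hDt
      rw [hHG]
      have hc := ((hHdiff (G (p,s))).hasFDerivAt.comp ((p,s) : (ℝ×ℝ)×ℝ)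
        (hGdiff (p,s)).hasFDerivAt)
      have : (fun z : (ℝ×ℝ)×ℝ => H (G z)) = H ∘ G := rfl
      rw [this, hc.fderiv]
      rfl
    rw [hkey] at happ
    exact happ
  -- Liouville: flow preserves the form
  have hLiou : ∀ (p w1 w2 : ℝ × ℝ) (t : ℝ),
      γ (Φ p t) * ((fderiv ℝ G (p,t) (w1,0)).1 * (fderiv ℝ G (p,t) (w2,0)).2
        - (fderiv ℝ G (p,t) (w1,0)).2 * (fderiv ℝ G (p,t) (w2,0)).1)
      = γ p * (w1.1 * w2.2 - w1.2 * w2.1) := by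
    intro p w1 w2 t
    set W : ℝ → ℝ := fun s => γ (Φ p s) *
      ((fderiv ℝ G (p,s) (w1,0)).1 * (fderiv ℝ G (p,s) (w2,0)).2
        - (fderiv ℝ G (p,s) (w1,0)).2 * (fderiv ℝ G (p,s) (w2,0)).1) with hWdef
    have hWder : ∀ s, HasDerivAt W 0 s := by
      intro s
      have ha := hODE p w1 s
      have hb := hODE p w2 s
      have hγc : HasDerivAt (fun s => γ (Φ p s)) (fderiv ℝ γ (Φ p s) (H (Φ p s))) s :=
        (hγdiff (Φ p s)).hasFDerivAt.comp_hasDerivAt s (hΦder p s)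
      have ha1 : HasDerivAt (fun r => (fderiv ℝ G (p,r) (w1,0)).1)
          (fderiv ℝ H (Φ p s) (fderiv ℝ G (p,s) (w1,0))).1 s :=
        (ContinuousLinearMap.fst ℝ ℝ ℝ).hasFDerivAt.comp_hasDerivAt s ha
      have ha2 : HasDerivAt (fun r => (fderiv ℝ G (p,r) (w1,0)).2)
          (fderiv ℝ H (Φ p s) (fderiv ℝ G (p,s) (w1,0))).2 s :=
        (ContinuousLinearMap.snd ℝ ℝ ℝ).hasFDerivAt.comp_hasDerivAt s ha
      have hb1 : HasDerivAt (fun r => (fderiv ℝ G (p,r) (w2,0)).1)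
          (fderiv ℝ H (Φ p s) (fderiv ℝ G (p,s) (w2,0))).1 s :=
        (ContinuousLinearMap.fst ℝ ℝ ℝ).hasFDerivAt.comp_hasDerivAt s hb
      have hb2 : HasDerivAt (fun r => (fderiv ℝ G (p,r) (w2,0)).2)
          (fderiv ℝ H (Φ p s) (fderiv ℝ G (p,s) (w2,0))).2 s :=
        (ContinuousLinearMap.snd ℝ ℝ ℝ).hasFDerivAt.comp_hasDerivAt s hb
      have hmul := hγc.mul ((ha1.mul hb2).sub (ha2.mul hb1))
      convert hmul using 1
      case e'_4 => rfl
      case e'_5 => rfl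
      case e'_8 => rfl
      simp only [Pi.sub_apply, Pi.mul_apply]
      set y := Φ p s
      set a := fderiv ℝ G (p,s) (w1,0)
      set b := fderiv ℝ G (p,s) (w2,0)
      set L := fderiv ℝ H y with hL
      have htr := det_trace L a b
      have hd := hdiv y
      rw [← hL] at hd
      have hγH : fderiv ℝ γ y (H y)
          = (H y).1 * fderiv ℝ γ y ((1:ℝ),(0:ℝ)) + (H y).2 * fderiv ℝ γ y ((0:ℝ),(1:ℝ)) := by
        rw [clm_lin (fderiv ℝ γ y) (H y)]; simp [smul_eq_mul]
      rw [hγH]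
      linear_combination (-(a.1 * b.2 - a.2 * b.1)) * hd - γ y * htr
    have hWd : Differentiable ℝ W := fun s => (hWder s).differentiableAt
    have hW0 : W t = W 0 := is_const_of_deriv_eq_zero hWd (fun s => (hWder s).deriv) t 0
    have hA0 : ∀ w : ℝ × ℝ, fderiv ℝ G (p, 0) (w, 0) = w := by
      intro w
      have hid : (fun q : ℝ × ℝ => Φ q 0) = id := funext hΦ0
      have h1 := hA p 0
      rw [hid] at h1
      have h2 := h1.unique (hasFDerivAt_id p)
      have := congrArg (fun (L : (ℝ×ℝ) →L[ℝ] (ℝ×ℝ)) => L w) h2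
      simpa using this
    have : W t = γ p * (w1.1 * w2.2 - w1.2 * w2.1) := by
      rw [hW0, hWdef]
      simp [hΦ0, hA0]
    rw [← this, hWdef]
  -- derivative of the shift map
  have hΨ : HasFDerivAt (fun p => Φ p (α p))
      ((fderiv ℝ G (x, α x)).comp
        ((ContinuousLinearMap.id ℝ (ℝ×ℝ)).prod (fderiv ℝ α x))) x :=
    (hGdiff (x, α x)).hasFDerivAt.comp (g := G) x
      ((hasFDerivAt_id x).prodMk (hαdiff x).hasFDerivAt)
  have hΨval : ∀ w : ℝ × ℝ, fderiv ℝ (fun p => Φ p (α p)) x w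
      = fderiv ℝ G (x, α x) (w, 0) + (fderiv ℝ α x w) • H (Φ x (α x)) := by
    intro w
    rw [hΨ.fderiv]
    have hsplit : ((w, fderiv ℝ α x w) : (ℝ×ℝ)×ℝ)
        = ((w, 0) : (ℝ×ℝ)×ℝ) + (fderiv ℝ α x w) • (((0:ℝ×ℝ),(1:ℝ)) : (ℝ×ℝ)×ℝ) := by
      ext <;> simp
    have : ((fderiv ℝ G (x, α x)).comp
        ((ContinuousLinearMap.id ℝ (ℝ×ℝ)).prod (fderiv ℝ α x))) w
        = fderiv ℝ G (x, α x) ((w, fderiv ℝ α x w) : (ℝ×ℝ)×ℝ) := by simp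
    rw [this, hsplit, map_add, map_smul, hDt ((x, α x) : (ℝ×ℝ)×ℝ)]
  -- assemble
  rw [hΨval u, hΨval v]
  have E1 := hLiou x u v (α x)
  have E2 : γ (Φ x (α x)) * ((fderiv ℝ G (x, α x) (u,0)).1 * (H (Φ x (α x))).2
      - (fderiv ℝ G (x, α x) (u,0)).2 * (H (Φ x (α x))).1)
      = γ x * (u.1 * (H x).2 - u.2 * (H x).1) := by
    rw [← hH, ← hH, hdfinv]
  have E3 : γ (Φ x (α x)) * ((fderiv ℝ G (x, α x) (v,0)).1 * (H (Φ x (α x))).2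
      - (fderiv ℝ G (x, α x) (v,0)).2 * (H (Φ x (α x))).1)
      = γ x * (v.1 * (H x).2 - v.2 * (H x).1) := by
    rw [← hH, ← hH, hdfinv]
  have E4 : fderiv ℝ α x u = u.1 * fderiv ℝ α x ((1:ℝ),(0:ℝ)) + u.2 * fderiv ℝ α x ((0:ℝ),(1:ℝ)) := by
    rw [clm_lin (fderiv ℝ α x) u]; simp [smul_eq_mul]
  have E5 : fderiv ℝ α x v = v.1 * fderiv ℝ α x ((1:ℝ),(0:ℝ)) + v.2 * fderiv ℝ α x ((0:ℝ),(1:ℝ)) := by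
    rw [clm_lin (fderiv ℝ α x) v]; simp [smul_eq_mul]
  have E6 : fderiv ℝ α x (H x) = (H x).1 * fderiv ℝ α x ((1:ℝ),(0:ℝ)) + (H x).2 * fderiv ℝ α x ((0:ℝ),(1:ℝ)) := by
    rw [clm_lin (fderiv ℝ α x) (H x)]; simp [smul_eq_mul]
  simp only [Prod.fst_add, Prod.snd_add, Prod.smul_fst, Prod.smul_snd, smul_eq_mul]
  rw [E4, E5, E6]
  linear_combination E1 + (v.1 * fderiv ℝ α x ((1:ℝ),(0:ℝ)) + v.2 * fderiv ℝ α x ((0:ℝ),(1:ℝ))) * E2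
    - (u.1 * fderiv ℝ α x ((1:ℝ),(0:ℝ)) + u.2 * fderiv ℝ α x ((0:ℝ),(1:ℝ))) * E3
end

section
/- Let (M, ω), f, H, Φ be as above and α ∈ C^∞(M, ℝ). Then Φ_α preserves ω (i.e. Φ_α^* ω = ω) if and only if H·α = 0 identically, i.e. if and only if α takes constant values along the orbits of H. -/
lemma lin2 {N : Type*} [NormedAddCommGroup N] [NormedSpace ℝ N]
    (L : (ℝ × ℝ) →L[ℝ] N) (w : ℝ × ℝ) :
    L w = w.1 • L (1, 0) + w.2 • L (0, 1) := by
  have hw : w = w.1 • ((1, 0) : ℝ × ℝ) + w.2 • ((0, 1) : ℝ × ℝ) := by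
    ext <;> simp
  conv_lhs => rw [hw]
  rw [map_add, map_smul, map_smul]

/-- In the setting of Statement 9 (Hamiltonian flow `Φ` of `f` with respect
to `ω = γ dx∧dy`, `γ` nowhere zero), the shift map `Φ_α` preserves `ω`
(i.e. `Φ_α^*ω = ω`) if and only if `H·α = 0` identically, i.e. iff `α` is constant along
the orbits of `H`. -/
theorem stmt10
    (γ : ℝ × ℝ → ℝ) (hγ : ContDiff ℝ (⊤ : ℕ∞) γ) (hγ0 : ∀ z, γ z ≠ 0)
    (f : ℝ × ℝ → ℝ) (hf : ContDiff ℝ (⊤ : ℕ∞) f)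
    (H : ℝ × ℝ → ℝ × ℝ) (hHsm : ContDiff ℝ (⊤ : ℕ∞) H)
    (hH : ∀ z u, fderiv ℝ f z u = γ z * (u.1 * (H z).2 - u.2 * (H z).1))
    (Φ : (ℝ × ℝ) → ℝ → (ℝ × ℝ))
    (hΦsm : ContDiff ℝ (⊤ : ℕ∞) (fun p : (ℝ × ℝ) × ℝ => Φ p.1 p.2))
    (hΦ0 : ∀ x, Φ x 0 = x)
    (hΦadd : ∀ x s t, Φ (Φ x t) s = Φ x (s + t))
    (hΦder : ∀ x t, HasDerivAt (Φ x) (H (Φ x t)) t)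
    (α : ℝ × ℝ → ℝ) (hα : ContDiff ℝ (⊤ : ℕ∞) α) :
    (∀ x u v : ℝ × ℝ,
        γ (Φ x (α x)) *
          ((fderiv ℝ (fun p => Φ p (α p)) x u).1 * (fderiv ℝ (fun p => Φ p (α p)) x v).2 -
           (fderiv ℝ (fun p => Φ p (α p)) x u).2 * (fderiv ℝ (fun p => Φ p (α p)) x v).1)
        = γ x * (u.1 * v.2 - u.2 * v.1))
      ↔ (∀ x, fderiv ℝ α x (H x) = 0) := by
  set F : (ℝ × ℝ) × ℝ → ℝ × ℝ := fun p => Φ p.1 p.2 with hFdef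
  have hFsm : ContDiff ℝ (⊤ : ℕ∞) F := hΦsm
  have hDF : ∀ z, HasFDerivAt F (fderiv ℝ F z) z := fun z =>
    (hFsm.differentiable (by simp) z).hasFDerivAt
  have hF1 : ContDiff ℝ (⊤ : ℕ∞) (fderiv ℝ F) := hFsm.fderiv_right (by simp)
  -- the inclusion p ↦ (p, t) and partial derivatives in x
  set L : (ℝ × ℝ) →L[ℝ] (ℝ × ℝ) × ℝ :=
    (ContinuousLinearMap.id ℝ (ℝ × ℝ)).prod 0 with hLdef
  have hLval : ∀ w : ℝ × ℝ, L w = (w, 0) := fun w => rfl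
  have hinl : ∀ (t : ℝ) (x : ℝ × ℝ),
      HasFDerivAt (fun p => Φ p t) ((fderiv ℝ F (x, t)).comp L) x := by
    intro t x
    have h1 : HasFDerivAt (fun p : ℝ × ℝ => ((p, t) : (ℝ × ℝ) × ℝ)) L x :=
      HasFDerivAt.prodMk (hasFDerivAt_id x) (hasFDerivAt_const t x)
    exact (hDF (x, t)).comp x h1
  -- time derivative of F
  have hT : ∀ (p : ℝ × ℝ) (t : ℝ), fderiv ℝ F (p, t) (0, 1) = H (Φ p t) := by
    intro p t
    have hcurve : HasDerivAt (fun s : ℝ => ((p, s) : (ℝ × ℝ) × ℝ)) (0, 1) t :=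
      HasDerivAt.prodMk (hasDerivAt_const t p) (hasDerivAt_id t)
    have h1 : HasDerivAt (fun s => F (p, s)) (fderiv ℝ F (p, t) (0, 1)) t :=
      (hDF (p, t)).comp_hasDerivAt t hcurve
    exact h1.unique (hΦder p t)
  -- at time 0 the flow is the identity
  have hA0 : ∀ (x : ℝ × ℝ) (w : ℝ × ℝ), fderiv ℝ F (x, 0) (w, 0) = w := by
    intro x w
    have h2 : HasFDerivAt (fun p : ℝ × ℝ => Φ p 0) (ContinuousLinearMap.id ℝ (ℝ × ℝ)) x := by
      have he : (fun p : ℝ × ℝ => Φ p 0) = id := funext hΦ0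
      rw [he]; exact hasFDerivAt_id x
    have h3 := (hinl 0 x).unique h2
    have := congrFun (congrArg (DFunLike.coe) h3) w
    simpa [hLval] using this
  -- the flow derivative maps H x to H (Φ x t)
  have hAH : ∀ (x : ℝ × ℝ) (t : ℝ), fderiv ℝ F (x, t) (H x, 0) = H (Φ x t) := by
    intro x t
    have hc : HasDerivAt (fun s => Φ x s) (H x) 0 := by
      have := hΦder x 0; rwa [hΦ0 x] at this
    have h1 : HasDerivAt (fun s => Φ (Φ x s) t) (fderiv ℝ F (x, t) (H x, 0)) 0 := by
      have h0 : HasFDerivAt (fun p => Φ p t) ((fderiv ℝ F (x, t)).comp L) (Φ x 0) := by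
        rw [hΦ0 x]; exact hinl t x
      have h2 := h0.comp_hasDerivAt 0 hc
      simpa [hLval, Function.comp_def] using h2
    have h2 : HasDerivAt (fun s => Φ (Φ x s) t) (H (Φ x t)) 0 := by
      have he : (fun s => Φ (Φ x s) t) = fun s => Φ x (t + s) := by
        funext s; rw [hΦadd x t s]
      rw [he]
      have hshift : HasDerivAt (fun s : ℝ => t + s) 1 0 := by
        simpa using (hasDerivAt_id (0:ℝ)).const_add t
      have := (hΦder x (t + 0)).scomp (0:ℝ) hshift
      simpa [Function.comp_def] using this
    exact h1.unique h2
  -- variational equation: t ↦ D_xΦ(x,t) u solves the linearized ODE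
  have happly : ∀ (G : (ℝ × ℝ) × ℝ → ((ℝ × ℝ) × ℝ) →L[ℝ] (ℝ × ℝ)),
      ContDiff ℝ (⊤ : ℕ∞) G → ∀ (z w₀ w : (ℝ × ℝ) × ℝ),
      fderiv ℝ (fun z' => G z' w₀) z w = (fderiv ℝ G z w) w₀ := by
    intro G hG z w₀ w
    have hc : HasFDerivAt (fun z' => G z' w₀)
        ((ContinuousLinearMap.apply ℝ (ℝ × ℝ) w₀).comp (fderiv ℝ G z)) z :=
      (ContinuousLinearMap.apply ℝ (ℝ × ℝ) w₀).hasFDerivAt.comp z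
        ((hG.differentiable (by simp) z).hasFDerivAt)
    rw [hc.fderiv]; rfl
  have hvar : ∀ (u x : ℝ × ℝ) (t : ℝ),
      HasDerivAt (fun s => fderiv ℝ F (x, s) (u, 0))
        (fderiv ℝ H (Φ x t) (fderiv ℝ F (x, t) (u, 0))) t := by
    intro u x t
    have hGsm : ContDiff ℝ (⊤ : ℕ∞) (fun z => fderiv ℝ F z ((u, 0) : (ℝ × ℝ) × ℝ)) :=
      (ContinuousLinearMap.apply ℝ (ℝ × ℝ) ((u, 0) : (ℝ × ℝ) × ℝ)).contDiff.comp hF1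
    have hcurve : HasDerivAt (fun s : ℝ => ((x, s) : (ℝ × ℝ) × ℝ)) (0, 1) t :=
      HasDerivAt.prodMk (hasDerivAt_const t x) (hasDerivAt_id t)
    have h1 : HasDerivAt (fun s => fderiv ℝ F (x, s) (u, 0))
        (fderiv ℝ (fun z => fderiv ℝ F z ((u, 0) : (ℝ × ℝ) × ℝ)) (x, t) (0, 1)) t :=
      ((hGsm.differentiable (by simp) _).hasFDerivAt).comp_hasDerivAt t hcurve
    have hF2 : HasFDerivAt (fderiv ℝ F) (fderiv ℝ (fderiv ℝ F) (x, t)) (x, t) :=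
      (hF1.differentiable (by simp) _).hasFDerivAt
    have hsym := second_derivative_symmetric (f := F) hDF hF2
      (((u, 0)) : (ℝ × ℝ) × ℝ) (((0, 1)) : (ℝ × ℝ) × ℝ)
    have h2 := happly (fderiv ℝ F) hF1 (x, t) ((u, 0) : (ℝ × ℝ) × ℝ) ((0, 1) : (ℝ × ℝ) × ℝ)
    have h3 := happly (fderiv ℝ F) hF1 (x, t) ((0, 1) : (ℝ × ℝ) × ℝ) ((u, 0) : (ℝ × ℝ) × ℝ)
    have hHF : (fun z : (ℝ × ℝ) × ℝ => fderiv ℝ F z ((0, 1) : (ℝ × ℝ) × ℝ))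
        = fun z => H (F z) := by
      funext z; exact hT z.1 z.2
    have h4 : fderiv ℝ (fun z : (ℝ × ℝ) × ℝ => H (F z)) (x, t) ((u, 0) : (ℝ × ℝ) × ℝ)
        = fderiv ℝ H (F (x, t)) (fderiv ℝ F (x, t) (u, 0)) := by
      have hc : HasFDerivAt (fun z : (ℝ × ℝ) × ℝ => H (F z))
          ((fderiv ℝ H (F (x, t))).comp (fderiv ℝ F (x, t))) (x, t) :=
        ((hHsm.differentiable (by simp) _).hasFDerivAt).comp _ (hDF (x, t))
      rw [hc.fderiv]; rfl
    rw [h2, ← hsym, ← h3, hHF, h4] at h1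
    exact h1
  -- divergence of γ H vanishes
  have div0 : ∀ y : ℝ × ℝ,
      fderiv ℝ γ y (H y) + γ y * ((fderiv ℝ H y (1, 0)).1 + (fderiv ℝ H y (0, 1)).2) = 0 := by
    intro y
    have hfd : ∀ z, HasFDerivAt f (fderiv ℝ f z) z := fun z =>
      (hf.differentiable (by simp) z).hasFDerivAt
    have hf1 : ContDiff ℝ (⊤ : ℕ∞) (fderiv ℝ f) := hf.fderiv_right (by simp)
    have hf2 : HasFDerivAt (fderiv ℝ f) (fderiv ℝ (fderiv ℝ f) y) y :=
      (hf1.differentiable (by simp) _).hasFDerivAt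
    have hsym := second_derivative_symmetric (f := f) hfd hf2
      (((1, 0)) : ℝ × ℝ) (((0, 1)) : ℝ × ℝ)
    -- compute fderiv (fun z => fderiv f z w₀) y as product rule derivatives
    have happf : ∀ (w₀ w : ℝ × ℝ),
        fderiv ℝ (fun z => fderiv ℝ f z w₀) y w = (fderiv ℝ (fderiv ℝ f) y w) w₀ := by
      intro w₀ w
      have hc : HasFDerivAt (fun z => fderiv ℝ f z w₀)
          ((ContinuousLinearMap.apply ℝ ℝ w₀).comp (fderiv ℝ (fderiv ℝ f) y)) y :=
        (ContinuousLinearMap.apply ℝ ℝ w₀).hasFDerivAt.comp y hf2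
      rw [hc.fderiv]; rfl
    -- product rule for z ↦ γ z * (H z).i
    have hγd : HasFDerivAt γ (fderiv ℝ γ y) y := (hγ.differentiable (by simp) y).hasFDerivAt
    have hHd : HasFDerivAt H (fderiv ℝ H y) y := (hHsm.differentiable (by simp) y).hasFDerivAt
    have hm2 : HasFDerivAt (fun z => γ z * (H z).2)
        (γ y • ((ContinuousLinearMap.snd ℝ ℝ ℝ).comp (fderiv ℝ H y)) + (H y).2 • fderiv ℝ γ y) y :=
      hγd.mul ((ContinuousLinearMap.snd ℝ ℝ ℝ).hasFDerivAt.comp y hHd)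
    have hm1 : HasFDerivAt (fun z => γ z * (H z).1)
        (γ y • ((ContinuousLinearMap.fst ℝ ℝ ℝ).comp (fderiv ℝ H y)) + (H y).1 • fderiv ℝ γ y) y :=
      hγd.mul ((ContinuousLinearMap.fst ℝ ℝ ℝ).hasFDerivAt.comp y hHd)
    -- identify fderiv f z e1 and e2
    have he1 : (fun z => fderiv ℝ f z ((1, 0) : ℝ × ℝ)) = fun z => γ z * (H z).2 := by
      funext z; rw [hH z (1, 0)]; ring
    have he2 : (fun z => fderiv ℝ f z ((0, 1) : ℝ × ℝ)) = fun z => -(γ z * (H z).1) := by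
      funext z; rw [hH z (0, 1)]; ring
    have k1 : (fderiv ℝ (fderiv ℝ f) y ((0, 1) : ℝ × ℝ)) ((1, 0) : ℝ × ℝ)
        = γ y * (fderiv ℝ H y (0, 1)).2 + (H y).2 * fderiv ℝ γ y (0, 1) := by
      rw [← happf (1, 0) (0, 1)]
      rw [he1, hm2.fderiv]
      simp [smul_eq_mul]
    have k2 : (fderiv ℝ (fderiv ℝ f) y ((1, 0) : ℝ × ℝ)) ((0, 1) : ℝ × ℝ)
        = -(γ y * (fderiv ℝ H y (1, 0)).1 + (H y).1 * fderiv ℝ γ y (1, 0)) := by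
      rw [← happf (0, 1) (1, 0)]
      have : HasFDerivAt (fun z => fderiv ℝ f z ((0, 1) : ℝ × ℝ))
          (-(γ y • ((ContinuousLinearMap.fst ℝ ℝ ℝ).comp (fderiv ℝ H y)) + (H y).1 • fderiv ℝ γ y)) y := by
        rw [he2]
        exact hm1.neg
      rw [this.fderiv]
      simp [smul_eq_mul]
    have hγH := lin2 (fderiv ℝ γ y) (H y)
    rw [← hsym, k2] at k1
    simp only [smul_eq_mul] at hγH
    rw [hγH]
    linear_combination -k1
  -- Liouville: the flow preserves ω
  have hL : ∀ (x : ℝ × ℝ) (t : ℝ) (u v : ℝ × ℝ),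
      γ (Φ x t) * ((fderiv ℝ F (x, t) (u, 0)).1 * (fderiv ℝ F (x, t) (v, 0)).2 -
        (fderiv ℝ F (x, t) (u, 0)).2 * (fderiv ℝ F (x, t) (v, 0)).1)
      = γ x * (u.1 * v.2 - u.2 * v.1) := by
    intro x t u v
    set a : ℝ → ℝ × ℝ := fun s => fderiv ℝ F (x, s) (u, 0) with hadef
    set b : ℝ → ℝ × ℝ := fun s => fderiv ℝ F (x, s) (v, 0) with hbdef
    set g : ℝ → ℝ := fun s => γ (Φ x s) * ((a s).1 * (b s).2 - (a s).2 * (b s).1) with hgdef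
    have hg0 : ∀ s, HasDerivAt g 0 s := by
      intro s
      set y := Φ x s with hydef
      have ha : HasDerivAt a (fderiv ℝ H y (a s)) s := hvar u x s
      have hb : HasDerivAt b (fderiv ℝ H y (b s)) s := hvar v x s
      have hγc : HasDerivAt (fun s' => γ (Φ x s')) (fderiv ℝ γ y (H y)) s :=
        ((hγ.differentiable (by simp) y).hasFDerivAt).comp_hasDerivAt s (hΦder x s)
      have ha1 : HasDerivAt (fun s' => (a s').1) ((fderiv ℝ H y (a s)).1) s :=
        (ContinuousLinearMap.fst ℝ ℝ ℝ).hasFDerivAt.comp_hasDerivAt s ha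
      have ha2 : HasDerivAt (fun s' => (a s').2) ((fderiv ℝ H y (a s)).2) s :=
        (ContinuousLinearMap.snd ℝ ℝ ℝ).hasFDerivAt.comp_hasDerivAt s ha
      have hb1 : HasDerivAt (fun s' => (b s').1) ((fderiv ℝ H y (b s)).1) s :=
        (ContinuousLinearMap.fst ℝ ℝ ℝ).hasFDerivAt.comp_hasDerivAt s hb
      have hb2 : HasDerivAt (fun s' => (b s').2) ((fderiv ℝ H y (b s)).2) s :=
        (ContinuousLinearMap.snd ℝ ℝ ℝ).hasFDerivAt.comp_hasDerivAt s hb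
      have hgd : HasDerivAt g
          (fderiv ℝ γ y (H y) * ((a s).1 * (b s).2 - (a s).2 * (b s).1)
            + γ y * (((fderiv ℝ H y (a s)).1 * (b s).2 + (a s).1 * (fderiv ℝ H y (b s)).2)
              - ((fderiv ℝ H y (a s)).2 * (b s).1 + (a s).2 * (fderiv ℝ H y (b s)).1))) s :=
        hγc.mul ((ha1.mul hb2).sub (ha2.mul hb1))
      have hD0 : fderiv ℝ γ y (H y) * ((a s).1 * (b s).2 - (a s).2 * (b s).1)
            + γ y * (((fderiv ℝ H y (a s)).1 * (b s).2 + (a s).1 * (fderiv ℝ H y (b s)).2)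
              - ((fderiv ℝ H y (a s)).2 * (b s).1 + (a s).2 * (fderiv ℝ H y (b s)).1)) = 0 := by
        have hka := lin2 (fderiv ℝ H y) (a s)
        have hkb := lin2 (fderiv ℝ H y) (b s)
        have ka1 : (fderiv ℝ H y (a s)).1
            = (a s).1 * (fderiv ℝ H y (1, 0)).1 + (a s).2 * (fderiv ℝ H y (0, 1)).1 := by
          rw [hka]; simp
        have ka2 : (fderiv ℝ H y (a s)).2
            = (a s).1 * (fderiv ℝ H y (1, 0)).2 + (a s).2 * (fderiv ℝ H y (0, 1)).2 := by
          rw [hka]; simp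
        have kb1 : (fderiv ℝ H y (b s)).1
            = (b s).1 * (fderiv ℝ H y (1, 0)).1 + (b s).2 * (fderiv ℝ H y (0, 1)).1 := by
          rw [hkb]; simp
        have kb2 : (fderiv ℝ H y (b s)).2
            = (b s).1 * (fderiv ℝ H y (1, 0)).2 + (b s).2 * (fderiv ℝ H y (0, 1)).2 := by
          rw [hkb]; simp
        rw [ka1, ka2, kb1, kb2]
        linear_combination ((a s).1 * (b s).2 - (a s).2 * (b s).1) * div0 y
      exact hD0 ▸ hgd
    have hconst : g t = g 0 :=
      is_const_of_deriv_eq_zero (fun s => (hg0 s).differentiableAt)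
        (fun s => (hg0 s).deriv) t 0
    have h0 : g 0 = γ x * (u.1 * v.2 - u.2 * v.1) := by
      simp only [hgdef, hadef, hbdef]
      rw [hΦ0 x, hA0 x u, hA0 x v]
    exact hconst.trans h0
  -- derivative of the shift map
  have hΦα : ∀ (x u : ℝ × ℝ),
      fderiv ℝ (fun p => Φ p (α p)) x u
        = fderiv ℝ F (x, α x) (u, 0) + (fderiv ℝ α x u) • H (Φ x (α x)) := by
    intro x u
    have h1 : HasFDerivAt (fun p : ℝ × ℝ => ((p, α p) : (ℝ × ℝ) × ℝ))
        ((ContinuousLinearMap.id ℝ (ℝ × ℝ)).prod (fderiv ℝ α x)) x :=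
      HasFDerivAt.prodMk (hasFDerivAt_id x) ((hα.differentiable (by simp) x).hasFDerivAt)
    have h2 : HasFDerivAt (fun p => Φ p (α p))
        ((fderiv ℝ F (x, α x)).comp
          ((ContinuousLinearMap.id ℝ (ℝ × ℝ)).prod (fderiv ℝ α x))) x :=
      by have := (hDF (x, α x)).comp x h1; exact this
    rw [h2.fderiv]
    have h3 : ((u, fderiv ℝ α x u) : (ℝ × ℝ) × ℝ)
        = ((u, 0) : (ℝ × ℝ) × ℝ) + (fderiv ℝ α x u) • ((0, 1) : (ℝ × ℝ) × ℝ) := by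
      ext <;> simp
    show fderiv ℝ F (x, α x) (u, fderiv ℝ α x u) = _
    rw [h3, map_add, map_smul, hT x (α x)]
  -- key pullback formula
  have key : ∀ (x u v : ℝ × ℝ),
      γ (Φ x (α x)) *
          ((fderiv ℝ (fun p => Φ p (α p)) x u).1 * (fderiv ℝ (fun p => Φ p (α p)) x v).2 -
           (fderiv ℝ (fun p => Φ p (α p)) x u).2 * (fderiv ℝ (fun p => Φ p (α p)) x v).1)
        = γ x * (u.1 * v.2 - u.2 * v.1) * (1 + fderiv ℝ α x (H x)) := by
    intro x u v
    have e1 := hL x (α x) u v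
    have e2 := hL x (α x) u (H x)
    have e3 := hL x (α x) (H x) v
    rw [hΦα x u, hΦα x v]
    have hAH' := hAH x (α x)
    have hu := lin2 (fderiv ℝ α x) u
    have hv := lin2 (fderiv ℝ α x) v
    have hw := lin2 (fderiv ℝ α x) (H x)
    simp only [smul_eq_mul] at hu hv hw
    rw [hAH'] at e2 e3
    simp only [Prod.fst_add, Prod.snd_add, Prod.smul_fst, Prod.smul_snd, smul_eq_mul]
    rw [hu, hv, hw]
    linear_combination e1 + (v.1 * fderiv ℝ α x (1, 0) + v.2 * fderiv ℝ α x (0, 1)) * e2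
      + (u.1 * fderiv ℝ α x (1, 0) + u.2 * fderiv ℝ α x (0, 1)) * e3
  constructor
  · intro hpres x
    have h2 := (hpres x (1, 0) (0, 1)).symm.trans (key x (1, 0) (0, 1))
    norm_num at h2
    have h3 : γ x * (fderiv ℝ α x (H x)) = 0 := by linear_combination -h2
    rcases mul_eq_zero.mp h3 with h | h
    · exact absurd h (hγ0 x)
    · exact h
  · intro h0 x u v
    rw [key x u v, h0 x]
    ring
end

section
/- Let f: D → ℝ be the restriction to D = g⁻¹[0, 2] of g(x,y) = ((x+1)² + y²)((x−1)² + y²), and let A = f⁻¹[0, 0.5], which has two connected components A₁ ∋ (−1, 0) and A₂ ∋ (1, 0). If ω is a volume form on D with Vol_ω(A₁) ≠ Vol_ω(A₂), then no diffeomorphism k of D preserving both f and ω can interchange A₁ and A₂; in particular the diffeomorphism h(x,y) = (−x,−y), which preserves f and swaps A₁ and A₂, is not isotopic within the group of f-preserving diffeomorphisms to any ω-preserving f-preserving diffeomorphism. -/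
open MeasureTheory

/-- Let `g(x,y) = ((x+1)²+y²)((x−1)²+y²)`, `D = g⁻¹[0,2]`,
`A = g⁻¹[0,1/2]` with connected components `A₁ ∋ (−1,0)` and `A₂ ∋ (1,0)`. If `ω` is a
volume form (measure `μ`) on `D` with `Vol(A₁) ≠ Vol(A₂)`, then no diffeomorphism `k`
of `D` preserving both `g|_D` and the volume can interchange `A₁` and `A₂`; in
particular `h(x,y) = (−x,−y)` (which preserves `g` and swaps `A₁, A₂`) is not isotopic,
through `g`-preserving diffeomorphisms of `D`, to any volume-preserving `g`-preserving
diffeomorphism. -/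
theorem stmt18
    (g : ℝ × ℝ → ℝ)
    (hg : ∀ p : ℝ × ℝ, g p = ((p.1 + 1) ^ 2 + p.2 ^ 2) * ((p.1 - 1) ^ 2 + p.2 ^ 2))
    (μ : Measure (ℝ × ℝ))
    (hμ : μ (connectedComponentIn (g ⁻¹' Set.Icc (0 : ℝ) (1 / 2)) (-1, 0))
        ≠ μ (connectedComponentIn (g ⁻¹' Set.Icc (0 : ℝ) (1 / 2)) (1, 0))) :
    (∀ k : ℝ × ℝ → ℝ × ℝ,
      Set.BijOn k (g ⁻¹' Set.Icc (0 : ℝ) 2) (g ⁻¹' Set.Icc (0 : ℝ) 2) →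
      (∀ p ∈ g ⁻¹' Set.Icc (0 : ℝ) 2, g (k p) = g p) →
      (∀ s ⊆ g ⁻¹' Set.Icc (0 : ℝ) 2, μ (k '' s) = μ s) →
      k '' connectedComponentIn (g ⁻¹' Set.Icc (0 : ℝ) (1 / 2)) (-1, 0)
        ≠ connectedComponentIn (g ⁻¹' Set.Icc (0 : ℝ) (1 / 2)) (1, 0)) ∧
    ¬ ∃ K : ℝ → (ℝ × ℝ → ℝ × ℝ),
        Continuous (fun q : ℝ × (ℝ × ℝ) => K q.1 q.2) ∧
        (∀ p : ℝ × ℝ, K 0 p = (-p.1, -p.2)) ∧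
        (∀ t : ℝ, Set.BijOn (K t) (g ⁻¹' Set.Icc (0 : ℝ) 2) (g ⁻¹' Set.Icc (0 : ℝ) 2) ∧
          ∀ p ∈ g ⁻¹' Set.Icc (0 : ℝ) 2, g (K t p) = g p) ∧
        (∀ s ⊆ g ⁻¹' Set.Icc (0 : ℝ) 2, μ (K 1 '' s) = μ s) := by
  set A : Set (ℝ × ℝ) := g ⁻¹' Set.Icc (0 : ℝ) (1 / 2) with hA
  set D : Set (ℝ × ℝ) := g ⁻¹' Set.Icc (0 : ℝ) 2 with hD
  have hAD : A ⊆ D := fun p hp => ⟨hp.1, hp.2.trans (by norm_num)⟩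
  have hm1 : ((-1 : ℝ), (0 : ℝ)) ∈ A := by
    simp only [hA, Set.mem_preimage, hg]
    norm_num
  have hp1 : ((1 : ℝ), (0 : ℝ)) ∈ A := by
    simp only [hA, Set.mem_preimage, hg]
    norm_num
  have hC1A : connectedComponentIn A (-1, 0) ⊆ A := connectedComponentIn_subset _ _
  have hC2A : connectedComponentIn A (1, 0) ⊆ A := connectedComponentIn_subset _ _
  constructor
  · intro k _ _ hμk heq
    apply hμ
    rw [← heq, hμk _ (hC1A.trans hAD)]
  · rintro ⟨K, hKcont, hK0, hKt, hK1μ⟩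
    -- K t maps A into A
    have hKA : ∀ t : ℝ, ∀ p ∈ A, K t p ∈ A := by
      intro t p hp
      have hpD : p ∈ D := hAD hp
      have := (hKt t).2 p hpD
      simp only [hA, Set.mem_preimage] at hp ⊢
      rw [this]; exact hp
    -- K 1 is continuous
    have hK1cont : Continuous (K 1) :=
      hKcont.comp (continuous_const.prodMk continuous_id)
    -- path argument: K 1 a lies in the component of K 0 a
    have key : ∀ a b : ℝ × ℝ, a ∈ A → K 0 a = b →
        K 1 a ∈ connectedComponentIn A b := by
      intro a b ha h0
      have hPcont : Continuous (fun t : ℝ => K t a) :=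
        hKcont.comp (continuous_id.prodMk continuous_const)
      have hrange : Set.range (fun t : ℝ => K t a) ⊆ A := by
        rintro _ ⟨t, rfl⟩; exact hKA t a ha
      have hconn : IsPreconnected (Set.range (fun t : ℝ => K t a)) :=
        (isConnected_range hPcont).isPreconnected
      have hbmem : b ∈ Set.range (fun t : ℝ => K t a) := ⟨0, h0⟩
      have := hconn.subset_connectedComponentIn hbmem hrange
      exact this ⟨1, rfl⟩
    have h0m : K 0 ((-1 : ℝ), (0 : ℝ)) = ((1 : ℝ), (0 : ℝ)) := by
      rw [hK0]; norm_num
    have h0p : K 0 ((1 : ℝ), (0 : ℝ)) = ((-1 : ℝ), (0 : ℝ)) := by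
      rw [hK0]; norm_num
    have hK1m : K 1 (-1, 0) ∈ connectedComponentIn A (1, 0) := key _ _ hm1 h0m
    have hK1p : K 1 (1, 0) ∈ connectedComponentIn A (-1, 0) := key _ _ hp1 h0p
    -- image of a component under K 1 lands in the component of the image point
    have himg : ∀ a b : ℝ × ℝ, a ∈ A →
        K 1 a ∈ connectedComponentIn A b →
        K 1 '' connectedComponentIn A a ⊆ connectedComponentIn A b := by
      intro a b ha hab
      have hconn : IsPreconnected (K 1 '' connectedComponentIn A a) :=
        (isPreconnected_connectedComponentIn).image _ hK1cont.continuousOn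
      have hsub : K 1 '' connectedComponentIn A a ⊆ A := by
        rintro _ ⟨p, hp, rfl⟩
        exact hKA 1 p (connectedComponentIn_subset _ _ hp)
      have hmem : K 1 a ∈ K 1 '' connectedComponentIn A a :=
        ⟨a, mem_connectedComponentIn ha, rfl⟩
      have := hconn.subset_connectedComponentIn hmem hsub
      rwa [← connectedComponentIn_eq hab] at this
    have h12 : K 1 '' connectedComponentIn A (-1, 0) ⊆ connectedComponentIn A (1, 0) :=
      himg _ _ hm1 hK1m
    have h21 : K 1 '' connectedComponentIn A (1, 0) ⊆ connectedComponentIn A (-1, 0) :=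
      himg _ _ hp1 hK1p
    have e1 : μ (K 1 '' connectedComponentIn A (-1, 0))
        = μ (connectedComponentIn A (-1, 0)) := hK1μ _ (hC1A.trans hAD)
    have e2 : μ (K 1 '' connectedComponentIn A (1, 0))
        = μ (connectedComponentIn A (1, 0)) := hK1μ _ (hC2A.trans hAD)
    exact hμ (le_antisymm (e1 ▸ measure_mono h12) (e2 ▸ measure_mono h21))
end
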